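/- Let θ be a primitive deterministic substitution on a two-letter alphabet whose subshift X_θ is periodic. Then the second eigenvalue λ₂ of the substitution matrix M_θ is 0, 1, or −1. -/

import Mathlib

/-- Iterates of a deterministic substitution on a letter. -/
def detPow {A : Type} (θ : A → List A) : ℕ → A → List A
  | 0, a => [a]
  | n + 1, a => (detPow θ n a).flatMap θ

/-- A word is `θ`-legal for a deterministic substitution `θ`. -/
def DetLegal {A : Type} (θ : A → List A) (w : List A) : Prop :=
  ∃ k : ℕ, 1 ≤ k ∧ ∃ c : A, w <:+: detPow θ k c

/-- The finite subword of a bi-infinite sequence starting at `i` of length `n`. -/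
def window {A : Type} (x : ℤ → A) (i : ℤ) (n : ℕ) : List A :=
  List.ofFn fun j : Fin n => x (i + (j.val : ℤ))

/-- The subshift of a deterministic substitution. -/
def XDet {A : Type} (θ : A → List A) : Set (ℤ → A) :=
  {x | ∀ (i : ℤ) (n : ℕ), DetLegal θ (window x i n)}

/-- The substitution matrix of a deterministic substitution on two letters. -/
def substMatrix (θ : Fin 2 → List (Fin 2)) : Matrix (Fin 2) (Fin 2) ℕ :=
  Matrix.of fun i j => (θ j).count i

/-- The second (smaller) eigenvalue of a nonnegative 2×2 integer matrix, which
always has real eigenvalues; the larger root is the Perron–Frobenius eigenvalue. -/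
noncomputable def secondEig (M : Matrix (Fin 2) (Fin 2) ℕ) : ℝ :=
  (((M.map (Nat.cast : ℕ → ℝ)).trace -
    Real.sqrt ((M.map (Nat.cast : ℕ → ℝ)).trace ^ 2 -
      4 * (M.map (Nat.cast : ℕ → ℝ)).det)) / 2)


/-!
Primitivity provides letters `b a` such that the word `b a` is legal, `θ^k(a)` begins with `a` and
`θ^k(b)` ends with `b`; the limits of `θ^{km}(b)` and `θ^{km}(a)` then glue to a point `x` of the
subshift with `θ^k(x) = x`. By hypothesis `x` is periodic; let `w` be its word of least period.
As `θ^k` fixes `x`, `θ^k(w)` is again a period word, so its length is `μ |w|` and the Parikh vector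
`v` of `w` is an integral eigenvector, `M^k v = μ v`. The other eigenvalue of `M^k` is the integer
`β = tr M^k - μ`, and `det [parikh θ^{km}(a), v]` is `β^m` times a nonzero integer while staying
bounded, since `θ^{km}(a)` is a prefix of the periodic word `x`. Hence `|β| ≤ 1`, and as `μ` and `β`
are the `k`-th powers of the eigenvalues of `M`, the second eigenvalue `λ₂` has `λ₂^k ∈ {-1, 0, 1}`.
-/

open Function Matrix

section Window

variable {α : Type} (x : ℤ → α)

@[simp]
theorem length_window (i : ℤ) (n : ℕ) : (window x i n).length = n := by
  simp [window]

theorem window_add (i : ℤ) (m n : ℕ) :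
    window x i (m + n) = window x i m ++ window x (i + m) n := by
  simp only [window, List.ofFn_add, Fin.val_natAdd]
  congr 2 with j
  push_cast
  ring_nf

theorem window_prefix (i : ℤ) {n N : ℕ} (h : n ≤ N) : window x i n <+: window x i N := by
  obtain ⟨t, rfl⟩ := Nat.exists_eq_add_of_le h
  rw [window_add]
  exact List.prefix_append _ _

theorem window_infix {i j : ℤ} {m n : ℕ} (hji : j ≤ i) (hin : i + n ≤ j + m) :
    window x i n <:+: window x j m := by
  obtain ⟨s, rfl⟩ : ∃ s : ℕ, i = j + s := ⟨(i - j).toNat, by omega⟩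
  obtain ⟨t, rfl⟩ : ∃ t : ℕ, m = s + n + t := ⟨m - s - n, by omega⟩
  rw [window_add, window_add]
  exact ⟨window x j s, window x (j + s + n) t, by push_cast; simp [add_assoc]⟩

theorem eq_window_of_prefix {l : List α} {i : ℤ} {N : ℕ} (h : l <+: window x i N) :
    l = window x i l.length := by
  obtain ⟨t, ht⟩ := h
  have hN : N = l.length + t.length := by
    simpa [window] using (congrArg List.length ht).symm
  rw [hN, window_add] at ht
  exact (List.append_inj ht (by simp [window])).1

theorem window_add_period {c : ℤ} (hc : Periodic x c) (i : ℤ) (n : ℕ) :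
    window x (i + c) n = window x i n := by
  simp only [window, add_right_comm _ c, show ∀ y, x (y + c) = x y from hc]

end Window

section Substitution

variable {A : Type} (θ : A → List A)

theorem detPow_add (m n : ℕ) (a : A) :
    detPow θ (m + n) a = (detPow θ m a).flatMap (detPow θ n) := by
  induction n with
  | zero => simp [detPow]
  | succ n ih => rw [← add_assoc, detPow, ih, List.flatMap_assoc]; rfl

variable {θ} in
theorem detPow_ne_nil (hθ : ∀ a, θ a ≠ []) (n : ℕ) (a : A) : detPow θ n a ≠ [] := by
  induction n with
  | zero => simp [detPow]
  | succ n ih =>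
    obtain ⟨c, hc⟩ := List.exists_mem_of_ne_nil _ ih
    simpa [detPow, List.flatMap_eq_nil_iff] using ⟨c, hc, hθ c⟩

variable {θ} in
theorem DetLegal.of_infix {u w : List A} (h : DetLegal θ w) (huw : u <:+: w) : DetLegal θ u := by
  obtain ⟨j, hj, c, hw⟩ := h
  exact ⟨j, hj, c, huw.trans hw⟩

variable {θ} in
theorem DetLegal.flatMap_detPow {w : List A} (h : DetLegal θ w) (n : ℕ) :
    DetLegal θ (w.flatMap (detPow θ n)) := by
  obtain ⟨j, hj, c, hw⟩ := h
  exact ⟨j + n, by omega, c, detPow_add θ j n c ▸ hw.flatMap _⟩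

end Substitution

theorem exists_isPeriodicPt_iterate {β : Type} [Finite β] (f : β → β) (y : β) :
    ∃ m n, 0 < n ∧ IsPeriodicPt f n (f^[m] y) := by
  obtain ⟨m, n, hmn, hmeq⟩ := Set.finite_univ.exists_lt_map_eq_of_forall_mem
    (f := fun n => f^[n] y) fun _ => Set.mem_univ _
  refine ⟨m, n - m, by omega, ?_⟩
  simp only [IsPeriodicPt, IsFixedPt, ← iterate_add_apply, Nat.sub_add_cancel hmn.le]
  exact hmeq.symm

section Seeds

variable {A : Type} {θ : A → List A}

theorem singleton_prefix_detPow_iterate {first : A → A} (h : ∀ c, [first c] <+: θ c) (n : ℕ)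
    (c : A) : [first^[n] c] <+: detPow θ n c := by
  induction n with
  | zero => exact List.prefix_refl _
  | succ n ih =>
    rw [iterate_succ_apply']
    exact (h _).trans (by simpa [detPow] using ih.flatMap θ)

theorem singleton_suffix_detPow_iterate {last : A → A} (h : ∀ c, [last c] <:+ θ c) (n : ℕ)
    (c : A) : [last^[n] c] <:+ detPow θ n c := by
  induction n with
  | zero => exact List.suffix_refl _
  | succ n ih =>
    rw [iterate_succ_apply']
    exact (h _).trans (by simpa [detPow] using ih.flatMap θ)

theorem DetLegal.seam {a b a' b' : A} (h : DetLegal θ [b, a]) (hb : [b'] <:+ θ b)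
    (ha : [a'] <+: θ a) : DetLegal θ [b', a'] := by
  obtain ⟨u, hu⟩ := hb
  obtain ⟨t, ht⟩ := ha
  exact (h.flatMap_detPow 1).of_infix ⟨u, t, by simp [detPow, ← hu, ← ht]⟩

/-- Seed letters for a two-sided fixed point: iterate the map sending a legal pair `b a` to the
last letter of `θ b` and the first letter of `θ a` until it cycles. -/
theorem exists_seeds [Finite A] (hθ : ∀ a, θ a ≠ []) {a₀ b₀ : A} (h₀ : DetLegal θ [b₀, a₀]) :
    ∃ r, 0 < r ∧ ∃ a b, DetLegal θ [b, a] ∧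
      ∀ q, [a] <+: detPow θ (r * q) a ∧ [b] <:+ detPow θ (r * q) b := by
  choose first hfirst using fun c => (⟨_, _, List.cons_head_tail (hθ c)⟩ : ∃ d, [d] <+: θ c)
  choose last hlast using fun c =>
    (⟨_, _, List.dropLast_append_getLast (hθ c)⟩ : ∃ d, [d] <:+ θ c)
  set g : A × A → A × A := Prod.map last first
  have legal_iterate (n : ℕ) : DetLegal θ [(g^[n] (b₀, a₀)).1, (g^[n] (b₀, a₀)).2] := by
    induction n with
    | zero => exact h₀
    | succ n ih => rw [iterate_succ_apply']; exact ih.seam (hlast _) (hfirst _)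
  obtain ⟨m, r, hr, hper⟩ := exists_isPeriodicPt_iterate g (b₀, a₀)
  set s := g^[m] (b₀, a₀)
  refine ⟨r, hr, s.2, s.1, legal_iterate m, fun q => ?_⟩
  have hsq := hper.mul_const q
  simp only [IsPeriodicPt, IsFixedPt, g, Prod.map_iterate, Prod.map, Prod.ext_iff] at hsq
  exact ⟨by simpa only [hsq.2] using singleton_prefix_detPow_iterate hfirst (r * q) s.2,
    by simpa only [hsq.1] using singleton_suffix_detPow_iterate hlast (r * q) s.1⟩

end Seeds

section Parikh

variable {A : Type} [DecidableEq A]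

def parikh (w : List A) : A → ℕ := fun c => w.count c

theorem parikh_append (u w : List A) : parikh (u ++ w) = parikh u + parikh w := by
  ext c; simp [parikh]

theorem parikh_ne_zero {w : List A} (hw : w ≠ []) : parikh w ≠ 0 := by
  obtain ⟨c, hc⟩ := List.exists_mem_of_ne_nil w hw
  exact Function.ne_iff.mpr ⟨c, (List.count_pos_iff.mpr hc).ne'⟩

theorem parikh_window_ne_zero (x : ℤ → A) (i : ℤ) {n : ℕ} (hn : 0 < n) :
    parikh (window x i n) ≠ 0 :=
  parikh_ne_zero (List.length_pos_iff.mp ((length_window x i n).symm ▸ hn))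

theorem parikh_flatMap [Fintype A] (f : A → List A) (w : List A) :
    parikh (w.flatMap f) = (Matrix.of fun i j => (f j).count i) *ᵥ parikh w := by
  induction w with
  | nil => ext; simp [parikh, Matrix.mulVec, dotProduct]
  | cons a w ih =>
    ext i
    rw [List.flatMap_cons, parikh_append, Pi.add_apply, ih]
    simp [parikh, Matrix.mulVec, dotProduct, List.count_cons, mul_add, Finset.sum_add_distrib,
      add_comm]

theorem parikh_flatMap_detPow (θ : Fin 2 → List (Fin 2)) (n : ℕ) (w : List (Fin 2)) :
    parikh (w.flatMap (detPow θ n)) = (substMatrix θ ^ n) *ᵥ parikh w := by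
  induction n with
  | zero => simp [detPow]
  | succ n ih =>
    rw [pow_succ', ← Matrix.mulVec_mulVec, ← ih, substMatrix, ← parikh_flatMap,
      List.flatMap_assoc]
    rfl

end Parikh

def cross (u v : Fin 2 → ℕ) : ℤ := u 0 * v 1 - u 1 * v 0

theorem cross_mulVec_of_mulVec_eq_smul {N : Matrix (Fin 2) (Fin 2) ℕ} {v : Fin 2 → ℕ} {μ : ℕ}
    (hv : N *ᵥ v = μ • v) (u : Fin 2 → ℕ) :
    cross (N *ᵥ u) v = ((N.trace : ℤ) - μ) * cross u v := by
  have h0 := congrArg (fun w => (w 0 : ℤ)) hv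
  have h1 := congrArg (fun w => (w 1 : ℤ)) hv
  simp only [Matrix.mulVec, dotProduct, Fin.sum_univ_two, Pi.smul_apply, smul_eq_mul,
    Nat.cast_add, Nat.cast_mul] at h0 h1
  simp only [cross, Matrix.trace_fin_two, Matrix.mulVec, dotProduct, Fin.sum_univ_two,
    Nat.cast_add, Nat.cast_mul]
  linear_combination (u 1 : ℤ) * h0 - (u 0 : ℤ) * h1

theorem pow_apply_pos_of_forall_pos {ι : Type} [Fintype ι] [DecidableEq ι] [Nonempty ι]
    {B : Matrix ι ι ℕ} (hB : ∀ i j, 0 < B i j) {s : ℕ} (hs : 0 < s) (i j : ι) : 0 < (B ^ s) i j := by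
  induction s, hs using Nat.le_induction generalizing i j with
  | base => simpa using hB i j
  | succ s _ ih =>
    rw [pow_succ, Matrix.mul_apply]
    exact Finset.sum_pos (fun l _ => Nat.mul_pos (ih i l) (hB l j)) Finset.univ_nonempty

theorem pos_of_mulVec_eq_smul {ι : Type} [Fintype ι] {N : Matrix ι ι ℕ} (hN : ∀ i j, 0 < N i j)
    {v : ι → ℕ} (hv : v ≠ 0) {μ : ℕ} (h : N *ᵥ v = μ • v) (i : ι) : 0 < v i := by
  obtain ⟨j, hj⟩ := Function.ne_iff.mp hv
  have : 0 < (N *ᵥ v) i := (Nat.mul_pos (hN i j) (Nat.pos_of_ne_zero hj)).trans_le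
    (Finset.single_le_sum (fun l _ => Nat.zero_le (N i l * v l)) (Finset.mem_univ j))
  rw [h] at this
  exact Nat.pos_of_mul_pos_left this

theorem mul_length_le_length_flatMap {A : Type} {f : A → List A} {c : ℕ}
    (hf : ∀ a, c ≤ (f a).length) (w : List A) : c * w.length ≤ (w.flatMap f).length := by
  induction w with
  | nil => simp
  | cons a w ih => simp only [List.flatMap_cons, List.length_append, List.length_cons]; grind

section Positive

variable {θ : Fin 2 → List (Fin 2)}

theorem count_detPow (n : ℕ) (a c : Fin 2) :
    (detPow θ n a).count c = (substMatrix θ ^ n) c a := by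
  simpa [parikh, Matrix.mulVec, dotProduct, List.count_singleton] using
    congrFun (parikh_flatMap_detPow θ n [a]) c

variable {k : ℕ} (hk : ∀ i j, 0 < (substMatrix θ ^ k) i j)
include hk

theorem mem_detPow_of_pos_pow (a c : Fin 2) : c ∈ detPow θ k a :=
  List.count_pos_iff.mp (count_detPow k a c ▸ hk c a)

theorem pos_of_pos_pow : 0 < k := by
  by_contra h
  simpa [Nat.eq_zero_of_not_pos h] using hk 0 1

theorem ne_nil_of_pos_pow (a : Fin 2) : θ a ≠ [] := by
  intro ha
  have h := mem_detPow_of_pos_pow hk a a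
  rw [← Nat.sub_add_cancel (pos_of_pos_pow hk), add_comm, detPow_add] at h
  simp [detPow, ha] at h

theorem two_pow_le_length_detPow (m : ℕ) (a : Fin 2) :
    2 ^ m ≤ (detPow θ (k * m) a).length := by
  have two_le : ∀ c, 2 ≤ (detPow θ k c).length := fun c =>
    (List.nodup_iff_count_le_one.mpr (by decide) : [(0 : Fin 2), 1].Nodup).subperm
      (by simp [mem_detPow_of_pos_pow hk]) |>.length_le
  induction m with
  | zero => simp [detPow]
  | succ m ih =>
    rw [Nat.mul_succ, detPow_add, pow_succ]
    exact (Nat.mul_le_mul_right 2 ih).trans (mul_comm 2 _ ▸ mul_length_le_length_flatMap two_le _)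

theorem lt_length_detPow_of_pos_pow (m : ℕ) (c : Fin 2) : m < (detPow θ (k * m) c).length :=
  Nat.lt_two_pow_self.trans_le (two_pow_le_length_detPow hk m c)

theorem exists_detLegal_pair : ∃ b a : Fin 2, DetLegal θ [b, a] := by
  have hlen := two_pow_le_length_detPow hk 1 0
  rw [mul_one] at hlen
  match h : detPow θ k 0, hlen with
  | b :: a :: t, _ =>
    exact ⟨b, a, k, pos_of_pos_pow hk, 0, h ▸ (List.prefix_append [b, a] t).isInfix⟩

end Positive

section TwoSided

variable {α : Type}

def twoSided (r l : ℕ → α) : ℤ → α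
  | Int.ofNat n => r n
  | Int.negSucc n => l n

theorem window_twoSided_zero (r l : ℕ → α) (n : ℕ) :
    window (twoSided r l) 0 n = List.ofFn fun j : Fin n => r j := by
  simp only [window, zero_add]
  rfl

theorem window_twoSided_neg (r l : ℕ → α) (n : ℕ) :
    window (twoSided r l) (-n) n = (List.ofFn fun j : Fin n => l j).reverse := by
  refine List.ext_getElem (by simp [window]) fun j hj _ => ?_
  have hj' : j < n := by simpa [window] using hj
  have : -(n : ℤ) + j = Int.negSucc (n - 1 - j) := by rw [Int.negSucc_eq]; omega
  simp [window, this, twoSided]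

variable [Inhabited α]

def prefixLimit (L : ℕ → List α) (n : ℕ) : α := (L n).getD n default

theorem ofFn_prefixLimit {L : ℕ → List α} (hmono : ∀ m, L m <+: L (m + 1))
    (hlen : ∀ m, m < (L m).length) (m : ℕ) :
    List.ofFn (fun j : Fin (L m).length => prefixLimit L j) = L m := by
  have mono : ∀ {m m'}, m ≤ m' → L m <+: L m' := by
    intro m m' h
    induction m', h using Nat.le_induction with
    | base => exact List.prefix_refl _
    | succ m' _ ih => exact ih.trans (hmono m')
  refine List.ext_getElem (by simp) fun j hj _ => ?_
  simp only [List.getElem_ofFn, prefixLimit, List.getD_eq_getElem _ _ (hlen j)]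
  rcases le_total j m with h | h
  · exact (mono h).getElem _
  · exact ((mono h).getElem _).symm

end TwoSided

section FixedPoint

variable {A : Type} [Inhabited A] (θ : A → List A) (k : ℕ) (b a : A)

/-- The bi-infinite word `… θ^{2k}(b) θ^k(b) b . a θ^k(a) θ^{2k}(a) …`, whose right half is the
limit of `θ^{km}(a)` and whose left half is the limit of `θ^{km}(b)` read backwards. -/
def fixedPoint : ℤ → A :=
  twoSided (prefixLimit fun m => detPow θ (k * m) a)
    (prefixLimit fun m => (detPow θ (k * m) b).reverse)

variable {θ k b a} (hgrow : ∀ m c, m < (detPow θ (k * m) c).length)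
include hgrow

theorem window_fixedPoint_right (ha : [a] <+: detPow θ k a) (m : ℕ) :
    window (fixedPoint θ k b a) 0 (detPow θ (k * m) a).length = detPow θ (k * m) a := by
  have mono (m : ℕ) : detPow θ (k * m) a <+: detPow θ (k * (m + 1)) a := by
    rw [Nat.mul_succ, add_comm, detPow_add]
    simpa using ha.flatMap (detPow θ (k * m))
  rw [fixedPoint, window_twoSided_zero]
  exact ofFn_prefixLimit mono (fun m => hgrow m a) m

theorem window_fixedPoint_left (hb : [b] <:+ detPow θ k b) (m : ℕ) :
    window (fixedPoint θ k b a) (-(detPow θ (k * m) b).length) (detPow θ (k * m) b).length =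
      detPow θ (k * m) b := by
  have mono (m : ℕ) : (detPow θ (k * m) b).reverse <+: (detPow θ (k * (m + 1)) b).reverse := by
    rw [List.reverse_prefix, Nat.mul_succ, add_comm, detPow_add]
    simpa using hb.flatMap (detPow θ (k * m))
  have h := ofFn_prefixLimit mono (fun m => by simpa using hgrow m b) m
  rw [fixedPoint, window_twoSided_neg, List.reverse_eq_iff]
  simpa using h

theorem fixedPoint_mem_XDet (ha : [a] <+: detPow θ k a) (hb : [b] <:+ detPow θ k b)
    (hleg : DetLegal θ [b, a]) : fixedPoint θ k b a ∈ XDet θ := by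
  intro i n
  set m := i.natAbs + n
  have hseam : window (fixedPoint θ k b a) (-(detPow θ (k * m) b).length)
      ((detPow θ (k * m) b).length + (detPow θ (k * m) a).length) =
        [b, a].flatMap (detPow θ (k * m)) := by
    rw [window_add, window_fixedPoint_left hgrow hb, neg_add_cancel,
      window_fixedPoint_right hgrow ha]
    simp
  refine (hleg.flatMap_detPow (k * m)).of_infix (hseam ▸ window_infix _ ?_ ?_)
  · have := hgrow m b; omega
  · have := hgrow m a; omega

theorem flatMap_window_fixedPoint (ha : [a] <+: detPow θ k a) (n : ℕ) :
    (window (fixedPoint θ k b a) 0 n).flatMap (detPow θ k) = window (fixedPoint θ k b a) 0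
      ((window (fixedPoint θ k b a) 0 n).flatMap (detPow θ k)).length := by
  apply eq_window_of_prefix (N := (detPow θ (k * (n + 1)) a).length)
  rw [window_fixedPoint_right hgrow ha (n + 1), Nat.mul_succ, detPow_add,
    ← window_fixedPoint_right hgrow ha n]
  exact (window_prefix _ _ (hgrow n a).le).flatMap _

end FixedPoint

section Periodic

variable {α : Type} {x : ℤ → α}

def shift (x : ℤ → α) : ℤ → α := fun n => x (n + 1)

theorem isPeriodicPt_shift_iff {n : ℕ} : IsPeriodicPt shift n x ↔ Periodic x n := by
  have iterate_shift : ∀ n : ℕ, shift^[n] x = fun t => x (t + n) := by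
    intro n
    induction n generalizing x with
    | zero => simp
    | succ n ih => simp [ih, shift, add_assoc]
  simp [IsPeriodicPt, IsFixedPt, iterate_shift, funext_iff, Periodic]

theorem Function.Periodic.of_nonneg {P L : ℕ} (hP : Periodic x P) (hP0 : 0 < P)
    (h : ∀ t : ℕ, x (t + L) = x t) : Periodic x L := by
  intro t
  have hmul := hP.nat_mul t.natAbs
  have : (t.natAbs : ℤ) ≤ t.natAbs * P := le_mul_of_one_le_right (by positivity) (by omega)
  lift t + t.natAbs * (P : ℤ) to ℕ using (by omega) with s hs
  calc x (t + L) = x (t + t.natAbs * (P : ℤ) + L) := by rw [add_right_comm, hmul]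
    _ = x t := by rw [← hs, h s, hs, hmul]

/-- On the right half, `x = w w w …` forces `x = f(w) f(w) …`; periodicity spreads this to the
left half. -/
theorem Function.Periodic.length_flatMap_window {f : α → List α} (hf : ∀ a, f a ≠ [])
    (hx : ∀ n, (window x 0 n).flatMap f = window x 0 ((window x 0 n).flatMap f).length)
    {P : ℕ} (hP : Periodic x P) (hP0 : 0 < P) :
    Periodic x ((window x 0 P).flatMap f).length := by
  set L := ((window x 0 P).flatMap f).length
  refine hP.of_nonneg hP0 fun t => ?_
  set n' := ((window x 0 (t + 1)).flatMap f).length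
  have hn' : t + 1 ≤ n' := by
    have := mul_length_le_length_flatMap (fun a => List.length_pos_iff.mpr (hf a))
      (window x 0 (t + 1))
    rw [length_window] at this
    omega
  have hshift : window x L n' = window x 0 n' := by
    have h := hx (P + (t + 1))
    rw [window_add x 0 P, window_add_period x hP, List.flatMap_append, List.length_append,
      window_add x 0 L, hx P, hx (t + 1), zero_add, List.append_cancel_left_eq] at h
    simp only [length_window] at h
    exact h.symm
  simp only [window, List.ofFn_inj] at hshift
  simpa [add_comm] using congrFun hshift ⟨t, hn'⟩

end Periodic

section PeriodicCount

variable {x : ℤ → Fin 2} {P : ℕ} (hP : Periodic x P)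
include hP

theorem parikh_window_mul_period (q : ℕ) :
    parikh (window x 0 (q * P)) = q • parikh (window x 0 P) := by
  induction q with
  | zero => ext; simp [parikh, window]
  | succ q ih =>
    rw [Nat.succ_mul, window_add, parikh_append, ih, Nat.cast_mul,
      window_add_period x (hP.nat_mul q), succ_nsmul]

theorem abs_cross_parikh_window_le (hP0 : 0 < P) (n : ℕ) :
    |cross (parikh (window x 0 n)) (parikh (window x 0 P))| ≤ P * P := by
  set v := parikh (window x 0 P)
  set u := parikh (window x 0 (n % P))
  have hsplit : parikh (window x 0 n) = (n / P) • v + u := by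
    conv_lhs => rw [← Nat.div_add_mod' n P]
    rw [window_add, parikh_append, parikh_window_mul_period hP, Nat.cast_mul,
      window_add_period x (hP.nat_mul _)]
  have hu (c : Fin 2) : u c ≤ P :=
    (List.count_le_length ..).trans ((length_window ..).trans_le (Nat.mod_lt n hP0).le)
  have hv (c : Fin 2) : v c ≤ P := (List.count_le_length ..).trans (length_window ..).le
  have hcross : cross ((n / P) • v + u) v = cross u v := by
    simp only [cross, Pi.add_apply, Pi.smul_apply, smul_eq_mul]
    push_cast
    ring
  rw [hsplit, hcross, cross]
  exact abs_sub_le_of_nonneg_of_le (by positivity) (by exact_mod_cast Nat.mul_le_mul (hu 0) (hv 1))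
    (by positivity) (by exact_mod_cast Nat.mul_le_mul (hu 1) (hv 0))

end PeriodicCount

theorem abs_le_one_of_abs_pow_mul_le {β c B : ℤ} (hc : c ≠ 0) (h : ∀ m : ℕ, |β ^ m * c| ≤ B) :
    |β| ≤ 1 := by
  by_contra! hβ
  obtain ⟨m, hm⟩ := pow_unbounded_of_one_lt B hβ
  have := h m
  rw [abs_mul, abs_pow] at this
  nlinarith [Int.one_le_abs hc, pow_pos (zero_lt_one.trans hβ) m]

section PeriodicFixedPoint

variable {θ : Fin 2 → List (Fin 2)} {k : ℕ} {a b : Fin 2}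
  (hk : ∀ i j, 0 < (substMatrix θ ^ k) i j) (ha : [a] <+: detPow θ k a)
include hk ha

/-- The image under `θ^k` of the word `w` of least period is again a period word, so its length
is a multiple `μ P` of the least period `P` and its Parikh vector is `μ` times that of `w`. -/
theorem exists_mulVec_parikh_window_minimalPeriod_eq_smul
    (hP0 : 0 < minimalPeriod shift (fixedPoint θ k b a)) :
    ∃ μ : ℕ, let w := window (fixedPoint θ k b a) 0 (minimalPeriod shift (fixedPoint θ k b a))
      substMatrix θ ^ k *ᵥ parikh w = μ • parikh w := by
  set x := fixedPoint θ k b a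
  have hgrow := lt_length_detPow_of_pos_pow hk
  have hP : Periodic x (minimalPeriod shift x) :=
    isPeriodicPt_shift_iff.mp (isPeriodicPt_minimalPeriod _ _)
  have hL := hP.length_flatMap_window (detPow_ne_nil (ne_nil_of_pos_pow hk) k)
    (flatMap_window_fixedPoint hgrow ha) hP0
  obtain ⟨μ, hμ⟩ := (isPeriodicPt_shift_iff.mpr hL).minimalPeriod_dvd
  refine ⟨μ, ?_⟩
  dsimp only
  rw [← parikh_flatMap_detPow, flatMap_window_fixedPoint hgrow ha, hμ, mul_comm,
    parikh_window_mul_period hP]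

/-- The deviation `cross (parikh θ^{km}(a)) v` of the letter counts of `θ^{km}(a)` from the
frequencies `v` is multiplied by the other eigenvalue `tr M^k - μ` at each step, and it stays
bounded because `θ^{km}(a)` is a prefix of a periodic word. -/
theorem abs_trace_sub_le_one {P : ℕ} (hP : Periodic (fixedPoint θ k b a) P) (hP0 : 0 < P) {μ : ℕ}
    (heig : substMatrix θ ^ k *ᵥ parikh (window (fixedPoint θ k b a) 0 P) =
      μ • parikh (window (fixedPoint θ k b a) 0 P)) :
    |((substMatrix θ ^ k).trace : ℤ) - μ| ≤ 1 := by
  set v := parikh (window (fixedPoint θ k b a) 0 P)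
  have hvpos : ∀ c, 0 < v c := pos_of_mulVec_eq_smul hk (parikh_window_ne_zero _ 0 hP0) heig
  set dev : ℕ → ℤ := fun m => cross (parikh (detPow θ (k * m) a)) v
  have hdev (m : ℕ) : dev m = (((substMatrix θ ^ k).trace : ℤ) - μ) ^ m * dev 0 := by
    induction m with
    | zero => simp
    | succ m ih =>
      rw [pow_succ, mul_right_comm, ← ih]
      simp only [dev, Nat.mul_succ, detPow_add, parikh_flatMap_detPow,
        cross_mulVec_of_mulVec_eq_smul heig, mul_comm]
  have hdev0 : dev 0 ≠ 0 := by
    have := hvpos 0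
    have := hvpos 1
    fin_cases a <;> simp [dev, cross, parikh, detPow] <;> omega
  refine abs_le_one_of_abs_pow_mul_le (B := P * P) hdev0 fun m => ?_
  simp only [← hdev, dev]
  rw [← window_fixedPoint_right (lt_length_detPow_of_pos_pow hk) ha m]
  exact abs_cross_parikh_window_le hP hP0 _

theorem exists_integral_eigenvector_of_periodic (hb : [b] <:+ detPow θ k b)
    (hleg : DetLegal θ [b, a])
    (hper : ∀ x ∈ XDet θ, ∃ per : ℤ, 0 < per ∧ ∀ n : ℤ, x (n + per) = x n) :
    ∃ (μ : ℕ) (v : Fin 2 → ℕ), v ≠ 0 ∧ substMatrix θ ^ k *ᵥ v = μ • v ∧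
      |((substMatrix θ ^ k).trace : ℤ) - μ| ≤ 1 := by
  set x := fixedPoint θ k b a
  obtain ⟨per, hper0, hperx⟩ :=
    hper x (fixedPoint_mem_XDet (lt_length_detPow_of_pos_pow hk) ha hb hleg)
  have hx : IsPeriodicPt shift per.toNat x :=
    isPeriodicPt_shift_iff.mpr (by rwa [Int.toNat_of_nonneg hper0.le])
  have hP0 := hx.minimalPeriod_pos (by omega)
  have hP : Periodic x (minimalPeriod shift x) :=
    isPeriodicPt_shift_iff.mp (isPeriodicPt_minimalPeriod _ _)
  obtain ⟨μ, heig⟩ := exists_mulVec_parikh_window_minimalPeriod_eq_smul hk ha hP0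
  exact ⟨μ, _, parikh_window_ne_zero x 0 hP0, heig, abs_trace_sub_le_one hk ha hP hP0 heig⟩

end PeriodicFixedPoint

section Eigenvalues

theorem trace_pow_fin_two {A : Matrix (Fin 2) (Fin 2) ℝ} {μ₁ μ₂ : ℝ} (hsum : μ₁ + μ₂ = A.trace)
    (hprod : μ₁ * μ₂ = A.det) (n : ℕ) : (A ^ n).trace = μ₁ ^ n + μ₂ ^ n := by
  have cayley_hamilton : A ^ 2 = A.trace • A - A.det • 1 := by
    have := A.aeval_self_charpoly
    rw [Matrix.charpoly_fin_two] at this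
    simp only [map_add, map_sub, map_pow, Polynomial.aeval_X, map_mul, Polynomial.aeval_C,
      Algebra.algebraMap_eq_smul_one, smul_mul_assoc, one_mul] at this
    calc A ^ 2 = (A ^ 2 - A.trace • A + A.det • 1) + (A.trace • A - A.det • 1) := by abel
      _ = A.trace • A - A.det • 1 := by rw [this, zero_add]
  induction n using Nat.twoStepInduction with
  | zero => norm_num [Matrix.trace_one]
  | one => simp [hsum]
  | more n ih₀ ih₁ =>
    rw [pow_add, cayley_hamilton, mul_sub, mul_smul_comm, mul_smul_comm, ← pow_succ, mul_one,
      Matrix.trace_sub, Matrix.trace_smul, Matrix.trace_smul, ih₀, ih₁, ← hsum, ← hprod,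
      smul_eq_mul, smul_eq_mul]
    ring

theorem eq_pow_or_eq_pow_of_mulVec_eq_smul {A : Matrix (Fin 2) (Fin 2) ℝ} {μ₁ μ₂ : ℝ}
    (hsum : μ₁ + μ₂ = A.trace) (hprod : μ₁ * μ₂ = A.det) {n : ℕ} {v : Fin 2 → ℝ} (hv : v ≠ 0)
    {μ : ℝ} (h : A ^ n *ᵥ v = μ • v) : μ = μ₁ ^ n ∨ μ = μ₂ ^ n := by
  have hdet : (μ • 1 - A ^ n).det = 0 := Matrix.exists_mulVec_eq_zero_iff.mp
    ⟨v, hv, by rw [Matrix.sub_mulVec, Matrix.smul_mulVec, Matrix.one_mulVec, h, sub_self]⟩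
  have htrace := trace_pow_fin_two hsum hprod n
  have hdetpow : (A ^ n).det = μ₁ ^ n * μ₂ ^ n := by rw [Matrix.det_pow, ← hprod, mul_pow]
  rw [Matrix.trace_fin_two] at htrace
  rw [Matrix.det_fin_two] at hdet hdetpow
  have : (μ - μ₁ ^ n) * (μ - μ₂ ^ n) = 0 := by
    simp at hdet
    linear_combination hdet + μ * htrace - hdetpow
  rcases mul_eq_zero.mp this with h | h
  · exact .inl (sub_eq_zero.mp h)
  · exact .inr (sub_eq_zero.mp h)

theorem eq_zero_or_eq_one_or_eq_neg_one_of_pow_eq {x : ℝ} {n : ℕ} (hn : n ≠ 0) {z : ℤ}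
    (hz : |z| ≤ 1) (h : x ^ n = z) : x = 0 ∨ x = 1 ∨ x = -1 := by
  obtain rfl | hz1 : z = 0 ∨ |z| = 1 := by
    rw [abs_le] at hz
    rcases abs_cases z with ⟨_, _⟩ | ⟨_, _⟩ <;> omega
  · exact .inl (pow_eq_zero_iff hn |>.mp (by simpa using h))
  · have : |x| ^ n = 1 := by rw [← abs_pow, h, ← Int.cast_abs, hz1, Int.cast_one]
    have habs : |x| = 1 := (pow_eq_one_iff_of_nonneg (abs_nonneg x) hn).mp this
    rcases (abs_eq zero_le_one).mp habs with h | h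
    · exact .inr (.inl h)
    · exact .inr (.inr h)

end Eigenvalues

theorem exists_eigenvalue_ge_abs_secondEig (M : Matrix (Fin 2) (Fin 2) ℕ) :
    ∃ μ₁ : ℝ, μ₁ + secondEig M = (M.map (Nat.cast : ℕ → ℝ)).trace ∧
      μ₁ * secondEig M = (M.map (Nat.cast : ℕ → ℝ)).det ∧ |secondEig M| ≤ μ₁ := by
  set A := M.map (Nat.cast : ℕ → ℝ)
  have htrace : 0 ≤ A.trace := by simp only [A, Matrix.trace_fin_two, Matrix.map_apply]; positivity
  have hdisc : 0 ≤ A.trace ^ 2 - 4 * A.det := by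
    simp only [A, Matrix.trace_fin_two, Matrix.det_fin_two, Matrix.map_apply]
    nlinarith [sq_nonneg ((M 0 0 : ℝ) - M 1 1),
      mul_nonneg (Nat.cast_nonneg (α := ℝ) (M 0 1)) (Nat.cast_nonneg (M 1 0))]
  set s := √(A.trace ^ 2 - 4 * A.det)
  have hs : s ^ 2 = A.trace ^ 2 - 4 * A.det := Real.sq_sqrt hdisc
  have hμ₂ : secondEig M = (A.trace - s) / 2 := rfl
  refine ⟨(A.trace + s) / 2, by rw [hμ₂]; ring, by rw [hμ₂]; linear_combination -hs / 4, ?_⟩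
  rw [hμ₂, abs_le]
  constructor <;> linarith [Real.sqrt_nonneg (A.trace ^ 2 - 4 * A.det)]

theorem secondEig_eq_zero_or_one_or_neg_one (M : Matrix (Fin 2) (Fin 2) ℕ) {n : ℕ} (hn : n ≠ 0)
    {μ : ℕ} {v : Fin 2 → ℕ} (hv : v ≠ 0) (heig : M ^ n *ᵥ v = μ • v)
    (htr : |((M ^ n).trace : ℤ) - μ| ≤ 1) :
    secondEig M = 0 ∨ secondEig M = 1 ∨ secondEig M = -1 := by
  obtain ⟨μ₁, hsum, hprod, habs⟩ := exists_eigenvalue_ge_abs_secondEig M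
  have hpow : (M ^ n).map (Nat.cast : ℕ → ℝ) = M.map Nat.cast ^ n := by
    simpa using Matrix.map_pow M (Nat.castRingHom ℝ) n
  have heigR : M.map Nat.cast ^ n *ᵥ (fun i => (v i : ℝ)) = (μ : ℝ) • fun i => (v i : ℝ) := by
    ext i
    rw [← hpow]
    simpa [heig] using (RingHom.map_mulVec (Nat.castRingHom ℝ) (M ^ n) v i).symm
  have hvR : (fun i => (v i : ℝ)) ≠ 0 := fun h => hv (funext fun i => by simpa using congrFun h i)
  have htrR : (((M ^ n).trace : ℕ) : ℝ) = μ₁ ^ n + secondEig M ^ n := by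
    rw [← trace_pow_fin_two hsum hprod, ← hpow]
    simp [Matrix.trace_fin_two]
  have htr' : (((M ^ n).trace : ℕ) : ℝ) - μ ≤ 1 := by exact_mod_cast (abs_le.mp htr).2
  obtain ⟨z, hz, hzeq⟩ : ∃ z : ℤ, |z| ≤ 1 ∧ secondEig M ^ n = z := by
    rcases eq_pow_or_eq_pow_of_mulVec_eq_smul hsum hprod hvR heigR with h | h
    · exact ⟨_, htr, by push_cast; linarith⟩
    · -- `μ` is then the smaller eigenvalue, bounded by the larger one `tr M^n - μ ≤ 1`
      have : (μ : ℝ) ≤ 1 :=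
        calc (μ : ℝ) ≤ |secondEig M| ^ n := by rw [← abs_pow, ← h]; exact le_abs_self _
          _ ≤ μ₁ ^ n := pow_le_pow_left₀ (abs_nonneg _) habs n
          _ ≤ 1 := by linarith
      refine ⟨μ, ?_, by rw [← h]; simp⟩
      rw [abs_of_nonneg (by positivity)]
      exact_mod_cast this
  exact eq_zero_or_eq_one_or_eq_neg_one_of_pow_eq hn hz hzeq

/-- a primitive deterministic substitution on two letters whose
subshift is periodic has second eigenvalue `0`, `1` or `-1`. -/
theorem periodic_second_eigenvalue (θ : Fin 2 → List (Fin 2))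
    (hprim : ∃ p : ℕ, ∀ i j : Fin 2, 0 < ((substMatrix θ) ^ p) i j)
    (hper : ∀ x ∈ XDet θ, ∃ per : ℤ, 0 < per ∧ ∀ n : ℤ, x (n + per) = x n) :
    secondEig (substMatrix θ) = 0 ∨ secondEig (substMatrix θ) = 1 ∨
      secondEig (substMatrix θ) = -1 := by
  obtain ⟨p, hp⟩ := hprim
  obtain ⟨b₀, a₀, hleg₀⟩ := exists_detLegal_pair hp
  obtain ⟨r, hr, a, b, hleg, hseed⟩ := exists_seeds (ne_nil_of_pos_pow hp) hleg₀
  have hk : ∀ i j, 0 < (substMatrix θ ^ (r * p)) i j := by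
    rw [pow_mul']
    exact pow_apply_pos_of_forall_pos hp hr
  obtain ⟨μ, v, hv, heig, htr⟩ :=
    exists_integral_eigenvector_of_periodic hk (hseed p).1 (hseed p).2 hleg hper
  exact secondEig_eq_zero_or_one_or_neg_one _ (pos_of_pos_pow hk).ne' hv heig htr
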